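/- arXiv:2106.01957 — 7 statements merged into one kernel-verified Lean document; each statement's English description precedes it below -/
import Mathlib

section
/- Let X be a metric space, let (f_i)_{i∈ℕ} be a sequence of functions from X to X, let δ > 0, and let (x_i)_{i∈ℕ} be a δ-pseudo-orbit for (f_i). Then there exists a sequence (g_i)_{i∈ℕ} of functions from X to X such that ρ((f_i),(g_i)) ≤ δ and (x_i) is an orbit for (g_i), i.e. x_i = g_0^i(x_0) for all i ∈ ℕ. -/
open scoped ENNReal

/-- supremum distance `ρ(f,g) = sup_x d(f x, g x)` between self-maps. -/
noncomputable def rho {X : Type*} [PseudoMetricSpace X] (f g : X → X) : ℝ≥0∞ :=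
  ⨆ x, edist (f x) (g x)

/-- supremum distance between sequences of self-maps. -/
noncomputable def rhoSeq {X : Type*} [PseudoMetricSpace X] (f g : ℕ → X → X) : ℝ≥0∞ :=
  ⨆ i, rho (f i) (g i)

/-- `seqComp f i = f_{i-1} ∘ ⋯ ∘ f_0`, with `seqComp f 0 = id`. -/
def seqComp {X : Type*} (f : ℕ → X → X) : ℕ → X → X
  | 0 => id
  | n + 1 => f n ∘ seqComp f n

theorem stmt1 {X : Type*} [MetricSpace X] (f : ℕ → X → X) (δ : ℝ) (hδ : 0 < δ)
    (x : ℕ → X) (hx : ∀ i : ℕ, dist (f i (x i)) (x (i + 1)) < δ) :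
    ∃ g : ℕ → X → X, rhoSeq f g ≤ ENNReal.ofReal δ ∧ ∀ i : ℕ, seqComp g i (x 0) = x i := by
  classical
  refine ⟨fun i y => if y = x i then x (i + 1) else f i y, ?_, ?_⟩
  · refine iSup_le fun i => iSup_le fun y => ?_
    by_cases h : y = x i
    · simp only [h, if_pos rfl]
      rw [edist_dist]
      exact ENNReal.ofReal_le_ofReal (hx i).le
    · simp [h]
  · intro i
    induction i with
    | zero => rfl
    | succ n ih =>
      show (if seqComp _ n (x 0) = x n then x (n+1) else f n (seqComp _ n (x 0))) = x (n+1)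
      rw [ih, if_pos rfl]
end

section
/- Let X be a metric space and (f_i)_{i∈ℕ} a sequence of functions from X to X. The nonautonomous dynamical system (X,(f_i)) has shadowing if and only if for all ε > 0 there exists δ > 0 such that for every sequence (g_i)_{i∈ℕ} of functions from X to X with ρ((g_i),(f_i)) < δ, every (g_i)-orbit is ε-shadowed by an (f_i)-orbit. -/
open scoped ENNReal

/-- The nonautonomous system `(X, (f_i))` has shadowing. -/
def ShadowingSeq {X : Type*} [MetricSpace X] (f : ℕ → X → X) : Prop :=
  ∀ ε > (0 : ℝ), ∃ δ > (0 : ℝ), ∀ x : ℕ → X,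
    (∀ i : ℕ, dist (f i (x i)) (x (i + 1)) < δ) →
    ∃ z : X, ∀ i : ℕ, dist (x i) (seqComp f i z) < ε

/-!
An orbit of a system `(g_i)` with `ρ((g_i), (f_i)) < δ` is a `δ`-pseudo-orbit of `(f_i)`.
Conversely, a `δ`-pseudo-orbit `(x_i)` of `(f_i)` is the exact orbit of `x_0` under the system
obtained by redefining each `f_i` at the single point `x_i` to send it to `x_{i+1}`, and this
system is within `δ` of `(f_i)`. So shadowing pseudo-orbits and shadowing orbits of nearby
systems are the same problem.
-/

section

variable {X : Type*}

theorem seqComp_succ_apply (f : ℕ → X → X) (n : ℕ) (x : X) :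
    seqComp f (n + 1) x = f n (seqComp f n x) :=
  rfl

theorem seqComp_apply_zero_eq {g : ℕ → X → X} {x : ℕ → X} (hx : ∀ i, g i (x i) = x (i + 1))
    (i : ℕ) : seqComp g i (x 0) = x i := by
  induction i with
  | zero => rfl
  | succ n ih => rw [seqComp_succ_apply, ih, hx]

variable [PseudoMetricSpace X]

theorem edist_le_rhoSeq (g f : ℕ → X → X) (i : ℕ) (y : X) :
    edist (g i y) (f i y) ≤ rhoSeq g f :=
  (le_iSup (fun y => edist (g i y) (f i y)) y).trans (le_iSup (fun j => rho (g j) (f j)) i)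

theorem rhoSeq_le_ofReal {g f : ℕ → X → X} {r : ℝ} (hr : 0 ≤ r)
    (h : ∀ i y, dist (g i y) (f i y) ≤ r) : rhoSeq g f ≤ ENNReal.ofReal r :=
  iSup_le fun i => iSup_le fun y => (edist_le_ofReal hr).mpr (h i y)

theorem dist_apply_seqComp_lt_of_rhoSeq_lt {g f : ℕ → X → X} {δ : ℝ}
    (hg : rhoSeq g f < ENNReal.ofReal δ) (x : X) (i : ℕ) :
    dist (f i (seqComp g i x)) (seqComp g (i + 1) x) < δ := by
  rw [seqComp_succ_apply, dist_comm, ← edist_lt_ofReal]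
  exact (edist_le_rhoSeq g f i _).trans_lt hg

theorem rhoSeq_update_le [DecidableEq X] (f : ℕ → X → X) {x : ℕ → X} {r : ℝ} (hr : 0 ≤ r)
    (hx : ∀ i, dist (f i (x i)) (x (i + 1)) ≤ r) :
    rhoSeq (fun i => Function.update (f i) (x i) (x (i + 1))) f ≤ ENNReal.ofReal r := by
  refine rhoSeq_le_ofReal hr fun i y => ?_
  rcases eq_or_ne y (x i) with rfl | hy
  · simpa only [Function.update_self, dist_comm] using hx i
  · simp only [Function.update_of_ne hy, dist_self, hr]

end

theorem stmt2 {X : Type*} [MetricSpace X] (f : ℕ → X → X) :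
    ShadowingSeq f ↔
      ∀ ε > (0 : ℝ), ∃ δ > (0 : ℝ), ∀ g : ℕ → X → X,
        rhoSeq g f < ENNReal.ofReal δ →
        ∀ x : X, ∃ z : X, ∀ i : ℕ, dist (seqComp g i x) (seqComp f i z) < ε := by
  classical
  constructor
  · intro hf ε hε
    obtain ⟨δ, hδ, hshadow⟩ := hf ε hε
    exact ⟨δ, hδ, fun g hg x => hshadow _ (dist_apply_seqComp_lt_of_rhoSeq_lt hg x)⟩
  · intro hf ε hε
    obtain ⟨δ, hδ, hshadow⟩ := hf ε hε
    refine ⟨δ / 2, half_pos hδ, fun x hx => ?_⟩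
    set g : ℕ → X → X := fun i => Function.update (f i) (x i) (x (i + 1))
    have hg : rhoSeq g f < ENNReal.ofReal δ :=
      (rhoSeq_update_le f (half_pos hδ).le fun i => (hx i).le).trans_lt
        ((ENNReal.ofReal_lt_ofReal_iff hδ).mpr (half_lt_self hδ))
    have horbit : ∀ i, seqComp g i (x 0) = x i :=
      seqComp_apply_zero_eq fun i => Function.update_self _ _ _
    obtain ⟨z, hz⟩ := hshadow g hg (x 0)
    exact ⟨z, fun i => horbit i ▸ hz i⟩
end

section
/- Let X be a compact metric space and f : X → X continuous, and suppose that for every ε > 0 there exists δ > 0 such that for every function g : X → X (not necessarily continuous) with ρ(g,f) < δ, every g-orbit is ε-shadowed by an f-orbit. If p ∈ X is an isolated point, then for every δ' > 0 there exists γ_p > 0 such that every γ_p-pseudo-orbit (x_i)_{i∈ℕ} for f satisfies one of: (1) p occurs at most once in (x_i); or (2) p is a periodic point of f, there exists M ∈ ℕ with x_M in the f-orbit of p, and for every such M, sup_{i∈ℕ} d(x_{M+i}, f^i(x_M)) < δ'. -/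
open scoped ENNReal

section Aux

variable {X : Type*} [MetricSpace X] {f : X → X} {p : X} {ε γ : ℝ}

/-- index function for the eventually periodic sequence obtained by looping the
segment `[a, b)` forever. -/
def loopIdx (a b n : ℕ) : ℕ := if n < a then n else a + (n - a) % (b - a)

lemma loopIdx_zero (a b : ℕ) : loopIdx a b 0 = 0 := by
  unfold loopIdx
  rcases Nat.eq_zero_or_pos a with h | h
  · subst h; simp
  · simp [h]

lemma loopIdx_lt {a b : ℕ} (hab : a < b) (n : ℕ) : loopIdx a b n < b := by
  unfold loopIdx
  split
  · omega
  · have : (n - a) % (b - a) < b - a := Nat.mod_lt _ (by omega)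
    omega

lemma loopIdx_succ {a b : ℕ} (u : ℕ → X) (hab : a < b) (hrep : u a = u b) (n : ℕ) :
    u (loopIdx a b (n + 1)) = u (loopIdx a b n + 1) := by
  unfold loopIdx
  by_cases h1 : n + 1 < a
  · rw [if_pos h1, if_pos (by omega)]
  · rw [if_neg h1]
    by_cases h2 : n < a
    · -- n + 1 = a
      have ha : n + 1 = a := by omega
      rw [if_pos h2]
      have h0 : (n + 1 - a) % (b - a) = 0 := by rw [ha]; simp
      rw [h0, ha]
      simp
    · rw [if_neg h2]
      set e := b - a with he
      have hepos : 0 < e := by omega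
      set m := n - a with hm
      have hm1 : n + 1 - a = m + 1 := by omega
      rw [hm1]
      set q := m % e with hq
      have hqlt : q < e := Nat.mod_lt _ hepos
      obtain ⟨c, hc⟩ : ∃ c, m = e * c + q :=
        ⟨m / e, by rw [hq]; exact (Nat.div_add_mod m e).symm⟩
      have hmod : (m + 1) % e = (q + 1) % e := by
        rw [hc, Nat.add_assoc, Nat.mul_add_mod]
      rcases eq_or_lt_of_le (Nat.succ_le_of_lt hqlt) with heq | hlt
      · have heq' : q + 1 = e := heq
        have h0 : (m + 1) % e = 0 := by rw [hmod, heq', Nat.mod_self]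
        rw [h0]
        have hb : a + q + 1 = b := by omega
        rw [hb]
        simpa using hrep
      · have h0 : (m + 1) % e = q + 1 := by rw [hmod, Nat.mod_eq_of_lt hlt]
        rw [h0]
        rfl

lemma gadget (hγ : 0 ≤ γ) (u : ℕ → X) (b : ℕ)
    (hu : ∀ i, dist (f (u i)) (u (i + 1)) ≤ γ)
    (hinj : ∀ m n, m < b → n < b → u m = u n → m = n) :
    ∃ g : X → X, (∀ y, dist (g y) (f y) ≤ γ) ∧ ∀ m, m < b → g (u m) = u (m + 1) := by
  classical
  refine ⟨fun z => if hz : ∃ m, m < b ∧ u m = z then u (Nat.find hz + 1) else f z, ?_, ?_⟩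
  · intro y
    by_cases hz : ∃ m, m < b ∧ u m = y
    · simp only [dif_pos hz]
      obtain ⟨-, h2⟩ := Nat.find_spec hz
      have hd := hu (Nat.find hz)
      rw [h2] at hd
      exact le_trans (le_of_eq (dist_comm _ _)) hd
    · simp only [dif_neg hz, dist_self]
      exact hγ
  · intro m hm
    have hz : ∃ m', m' < b ∧ u m' = u m := ⟨m, hm, rfl⟩
    simp only [dif_pos hz]
    obtain ⟨h1, h2⟩ := Nat.find_spec hz
    rw [hinj _ _ h1 hm h2]

lemma shadow_seg (hγ : 0 ≤ γ)
    (hzp : ∀ g : X → X, (∀ y, dist (g y) (f y) ≤ γ) → ∀ n, dist (g^[n] p) (f^[n] p) < ε)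
    (u : ℕ → X) (b : ℕ) (hu : ∀ i, dist (f (u i)) (u (i + 1)) ≤ γ) (hu0 : u 0 = p)
    (hinj : ∀ m n, m < b → n < b → u m = u n → m = n) :
    ∀ n ≤ b, dist (u n) (f^[n] p) < ε := by
  obtain ⟨g, hgd, hg⟩ := gadget hγ u b hu hinj
  have horb : ∀ n, n ≤ b → g^[n] p = u n := by
    intro n
    induction n with
    | zero => intro _; simp [hu0]
    | succ n ih =>
      intro hn
      rw [Function.iterate_succ_apply', ih (by omega), hg n (by omega)]
  intro n hn
  rw [← horb n hn]
  exact hzp g hgd n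

lemma shadow_loop (hγ : 0 ≤ γ)
    (hzp : ∀ g : X → X, (∀ y, dist (g y) (f y) ≤ γ) → ∀ n, dist (g^[n] p) (f^[n] p) < ε)
    (u : ℕ → X) (a b : ℕ) (hab : a < b) (hrep : u a = u b)
    (hu : ∀ i, dist (f (u i)) (u (i + 1)) ≤ γ) (hu0 : u 0 = p)
    (hinj : ∀ m n, m < b → n < b → u m = u n → m = n) :
    ∀ n, dist (u (loopIdx a b n)) (f^[n] p) < ε := by
  obtain ⟨g, hgd, hg⟩ := gadget hγ u b hu hinj
  have horb : ∀ n, g^[n] p = u (loopIdx a b n) := by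
    intro n
    induction n with
    | zero => simp [loopIdx_zero, hu0]
    | succ n ih =>
      rw [Function.iterate_succ_apply', ih, hg _ (loopIdx_lt hab n)]
      exact (loopIdx_succ u hab hrep n).symm
  intro n
  rw [← horb n]
  exact hzp g hgd n

lemma first_repeat (u : ℕ → X) (L : ℕ) :
    (∀ m n, m ≤ L → n ≤ L → u m = u n → m = n) ∨
      ∃ a b, a < b ∧ b ≤ L ∧ u a = u b ∧ ∀ m n, m < b → n < b → u m = u n → m = n := by
  classical
  by_cases H : ∃ b, b ≤ L ∧ ∃ a, a < b ∧ u a = u b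
  · right
    obtain ⟨hbL, a, hab, hrep⟩ := Nat.find_spec H
    refine ⟨a, Nat.find H, hab, hbL, hrep, ?_⟩
    intro m n hm hn hmn
    by_contra hne
    rcases Nat.lt_or_ge m n with hlt | hge
    · exact Nat.find_min H hn ⟨by omega, m, hlt, hmn⟩
    · exact Nat.find_min H hm ⟨by omega, n, by omega, hmn.symm⟩
  · left
    intro m n hm hn hmn
    by_contra hne
    apply H
    rcases Nat.lt_or_ge m n with hlt | hge
    · exact ⟨n, hn, m, hlt, hmn⟩
    · exact ⟨m, hm, n, by omega, hmn.symm⟩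

/-- the pseudo-orbit with the loop `[a,b)` cut out. -/
def shortcut (u : ℕ → X) (a e : ℕ) : ℕ → X := fun n => if n ≤ a then u n else u (n + e)

lemma shortcut_pseudo (u : ℕ → X) (a b : ℕ) (hab : a < b) (hrep : u a = u b)
    (hu : ∀ i, dist (f (u i)) (u (i + 1)) ≤ γ) :
    ∀ i, dist (f (shortcut u a (b - a) i)) (shortcut u a (b - a) (i + 1)) ≤ γ := by
  intro i
  unfold shortcut
  by_cases h1 : i + 1 ≤ a
  · rw [if_pos (by omega), if_pos h1]
    exact hu i
  · rw [if_neg h1]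
    by_cases h2 : i ≤ a
    · have hia : i = a := by omega
      subst hia
      rw [if_pos le_rfl, hrep]
      have he : i + 1 + (b - i) = b + 1 := by omega
      rw [he]
      exact hu b
    · rw [if_neg h2]
      have he : i + 1 + (b - a) = (i + (b - a)) + 1 := by omega
      rw [he]
      exact hu _

lemma shortcut_zero (u : ℕ → X) (a e : ℕ) : shortcut u a e 0 = u 0 := by
  unfold shortcut
  rw [if_pos (Nat.zero_le a)]

lemma per_aux (hγ : 0 ≤ γ)
    (hzp : ∀ g : X → X, (∀ y, dist (g y) (f y) ≤ γ) → ∀ n, dist (g^[n] p) (f^[n] p) < ε)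
    (hball : ∀ q : X, dist q p < ε → q = p) :
    ∀ m, 1 ≤ m → ∀ u : ℕ → X, (∀ i, dist (f (u i)) (u (i + 1)) ≤ γ) → u 0 = p → u m = p →
      ∃ P, 1 ≤ P ∧ f^[P] p = p := by
  intro m
  induction m using Nat.strong_induction_on with
  | _ m IH =>
    intro hm u hu hu0 hum
    rcases first_repeat u m with hinj | ⟨a, b, hab, hbm, hrep, hinjb⟩
    · exact absurd (hinj 0 m (by omega) le_rfl (hu0.trans hum.symm)) (by omega)
    · by_cases hap : u a = p
      · have ha0 : a = 0 := hinjb a 0 hab (by omega) (hap.trans hu0.symm)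
        subst ha0
        have hsh := shadow_loop hγ hzp u 0 b hab hrep hu hu0 hinjb b
        have hidx : loopIdx 0 b b = 0 := by
          unfold loopIdx
          rw [if_neg (by omega)]
          simp
        rw [hidx, hu0] at hsh
        exact ⟨b, hab, hball _ (by rwa [dist_comm] at hsh)⟩
      · have ha1 : 1 ≤ a := by
          rcases Nat.eq_zero_or_pos a with h | h
          · exact absurd (by rw [h]; exact hu0) hap
          · exact h
        have hbm' : b < m := by
          rcases eq_or_lt_of_le hbm with h | h
          · exact absurd (hrep.trans (by rw [h]; exact hum)) hap
          · exact h
        have hscp := shortcut_pseudo u a b hab hrep hu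
        have hsc0 : shortcut u a (b - a) 0 = p := by rw [shortcut_zero]; exact hu0
        have hscm : shortcut u a (b - a) (m - (b - a)) = p := by
          unfold shortcut
          rw [if_neg (by omega)]
          have : m - (b - a) + (b - a) = m := by omega
          rw [this]
          exact hum
        exact IH (m - (b - a)) (by omega) (by omega) (shortcut u a (b - a)) hscp hsc0 hscm

lemma grand (hγ : 0 ≤ γ)
    (hzp : ∀ g : X → X, (∀ y, dist (g y) (f y) ≤ γ) → ∀ n, dist (g^[n] p) (f^[n] p) < ε)
    (hball : ∀ q : X, dist q p < ε → q = p)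
    (P : ℕ) (hP : 1 ≤ P) (hfP : f^[P] p = p) :
    ∀ L : ℕ, ∀ u : ℕ → X, (∀ i, dist (f (u i)) (u (i + 1)) ≤ γ) → u 0 = p →
      dist (u L) (f^[L] p) < ε := by
  intro L
  induction L using Nat.strong_induction_on with
  | _ L IH =>
    intro u hu hu0
    rcases first_repeat u L with hinj | ⟨a, b, hab, hbL, hrep, hinjb⟩
    · exact shadow_seg hγ hzp u L hu hu0 (fun m n hm hn => hinj m n (by omega) (by omega))
        L le_rfl
    · have hsh := shadow_loop hγ hzp u a b hab hrep hu hu0 hinjb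
      set e := b - a with he
      have hepos : 0 < e := by omega
      set N := P * (a + 1) with hN
      have hNa : a < N := by
        have h1 : a + 1 ≤ P * (a + 1) := Nat.le_mul_of_pos_left _ hP
        omega
      have hfN : f^[N] p = p := by
        rw [hN, Function.iterate_mul]
        exact Function.iterate_fixed hfP (a + 1)
      have huN : u (loopIdx a b N) = p := by
        apply hball
        have := hsh N
        rwa [hfN] at this
      have hidxNe : loopIdx a b (N + e) = loopIdx a b N := by
        unfold loopIdx
        rw [if_neg (by omega), if_neg (by omega), ← he]
        congr 1
        have h1 : N + e - a = (N - a) + e := by omega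
        rw [h1, Nat.add_mod_right]
      have hfe : f^[e] p = p := by
        have h1 := hsh (N + e)
        rw [hidxNe, huN] at h1
        have h2 : f^[N + e] p = p := hball _ (by rwa [dist_comm] at h1)
        have h3 : f^[N + e] p = f^[e] p := by
          rw [Nat.add_comm, Function.iterate_add_apply, hfN]
        rw [← h3, h2]
      have hscp := shortcut_pseudo u a b hab hrep hu
      have hsc0 : shortcut u a e 0 = p := by rw [shortcut_zero]; exact hu0
      have hvL : shortcut u a e (L - e) = u L := by
        unfold shortcut
        by_cases hc : L - e ≤ a
        · have hLb : L = b := by omega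
          have hLe : L - e = a := by omega
          rw [if_pos hc, hLe, hrep, hLb]
        · rw [if_neg hc]
          congr 1
          omega
      have hIH := IH (L - e) (by omega) (shortcut u a e) hscp hsc0
      rw [hvL] at hIH
      have hfL : f^[L] p = f^[L - e] p := by
        have h1 : L = (L - e) + e := by omega
        conv_lhs => rw [h1]
        rw [Function.iterate_add_apply, hfe]
      rw [hfL]
      exact hIH

end Aux

theorem stmt5 {X : Type*} [MetricSpace X] [CompactSpace X] (f : X → X) (hf : Continuous f)
    (h : ∀ ε > (0 : ℝ), ∃ δ > (0 : ℝ), ∀ g : X → X, rho g f < ENNReal.ofReal δ →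
      ∀ x : X, ∃ z : X, ∀ i : ℕ, dist (g^[i] x) (f^[i] z) < ε)
    (p : X) (hp : IsOpen ({p} : Set X)) :
    ∀ δ' > (0 : ℝ), ∃ γp > (0 : ℝ), ∀ x : ℕ → X,
      (∀ i : ℕ, dist (f (x i)) (x (i + 1)) < γp) →
      ((∀ i j : ℕ, x i = p → x j = p → i = j) ∨
        ((∃ P : ℕ, 1 ≤ P ∧ f^[P] p = p) ∧
          (∃ M : ℕ, ∃ k : ℕ, f^[k] p = x M) ∧
          (∀ M : ℕ, (∃ k : ℕ, f^[k] p = x M) →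
            (⨆ i : ℕ, edist (x (M + i)) (f^[i] (x M))) < ENNReal.ofReal δ'))) := by
  intro δ' hδ'
  obtain ⟨r, hr, hball'⟩ := Metric.isOpen_iff.mp hp p rfl
  set ε := min (δ' / 2) r with hε
  have hεpos : 0 < ε := lt_min (by linarith) hr
  obtain ⟨δ, hδ, hshad⟩ := h ε hεpos
  refine ⟨δ / 2, by linarith, ?_⟩
  intro x hx
  have hγ : (0 : ℝ) ≤ δ / 2 := by linarith
  have hball : ∀ q : X, dist q p < ε → q = p := by
    intro q hq
    have hmem : q ∈ Metric.ball p r := by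
      rw [Metric.mem_ball]
      exact lt_of_lt_of_le hq (min_le_right _ _)
    simpa using hball' hmem
  have hzp : ∀ g : X → X, (∀ y, dist (g y) (f y) ≤ δ / 2) →
      ∀ n, dist (g^[n] p) (f^[n] p) < ε := by
    intro g hg n
    have hrho : rho g f < ENNReal.ofReal δ := by
      have h1 : rho g f ≤ ENNReal.ofReal (δ / 2) := by
        refine iSup_le fun y => ?_
        rw [edist_dist]
        exact ENNReal.ofReal_le_ofReal (hg y)
      refine lt_of_le_of_lt h1 ?_
      rw [ENNReal.ofReal_lt_ofReal_iff hδ]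
      linarith
    obtain ⟨z, hz⟩ := hshad g hrho p
    have hz0 := hz 0
    simp only [Function.iterate_zero_apply] at hz0
    have hzeq : z = p := hball z (by rwa [dist_comm] at hz0)
    have := hz n
    rwa [hzeq] at this
  by_cases hone : ∀ i j, x i = p → x j = p → i = j
  · exact Or.inl hone
  · right
    push_neg at hone
    obtain ⟨i0, j0, hxi0, hxj0, hij0⟩ := hone
    have key : ∃ i j, i < j ∧ x i = p ∧ x j = p := by
      rcases Nat.lt_or_ge i0 j0 with hlt | hge
      · exact ⟨i0, j0, hlt, hxi0, hxj0⟩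
      · exact ⟨j0, i0, by omega, hxj0, hxi0⟩
    obtain ⟨i, j, hij, hxi, hxj⟩ := key
    have hxle : ∀ n, dist (f (x n)) (x (n + 1)) ≤ δ / 2 := fun n => (hx n).le
    have hper : ∃ P, 1 ≤ P ∧ f^[P] p = p := by
      apply per_aux hγ hzp hball (j - i) (by omega) (fun n => x (i + n))
      · intro n
        have hh := hxle (i + n)
        rwa [Nat.add_assoc] at hh
      · simpa using hxi
      · show x (i + (j - i)) = p
        have hji : i + (j - i) = j := by omega
        rw [hji]
        exact hxj
    obtain ⟨P, hP1, hPp⟩ := hper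
    refine ⟨⟨P, hP1, hPp⟩, ⟨i, 0, by simpa using hxi.symm⟩, ?_⟩
    intro M hM
    obtain ⟨k, hk⟩ := hM
    set u : ℕ → X := fun n => if n < k then f^[n] p else x (M + (n - k)) with hu_def
    have hu : ∀ n, dist (f (u n)) (u (n + 1)) ≤ δ / 2 := by
      intro n
      by_cases h1 : n + 1 < k
      · have h2 : n < k := by omega
        simp only [hu_def, if_pos h1, if_pos h2]
        rw [← Function.iterate_succ_apply' f n p]
        simp [hγ]
      · by_cases h2 : n < k
        · have hk' : k = n + 1 := by omega
          simp only [hu_def, if_pos h2, if_neg h1]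
          have hfx : f (f^[n] p) = x M := by
            rw [← hk, hk']
            exact (Function.iterate_succ_apply' f n p).symm
          rw [hfx]
          have h0 : n + 1 - k = 0 := by omega
          rw [h0]
          simp [hγ]
        · simp only [hu_def, if_neg h1, if_neg h2]
          have e1 : M + (n + 1 - k) = (M + (n - k)) + 1 := by omega
          rw [e1]
          exact hxle _
    have hu0 : u 0 = p := by
      by_cases hk0 : 0 < k
      · simp [hu_def, hk0]
      · have hk0' : k = 0 := by omega
        have hxM : x M = p := by rw [← hk, hk0']; simp
        simp only [hu_def, if_neg hk0]
        simpa using hxM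
    have key2 : ∀ ii : ℕ, dist (x (M + ii)) (f^[ii] (x M)) < ε := by
      intro ii
      have h1 := grand hγ hzp hball P hP1 hPp (k + ii) u hu hu0
      have h2 : u (k + ii) = x (M + ii) := by
        have hcond : ¬ (k + ii < k) := by omega
        simp only [hu_def, if_neg hcond]
        congr 1
        omega
      have h3 : f^[k + ii] p = f^[ii] (x M) := by
        rw [Nat.add_comm, Function.iterate_add_apply, hk]
      rw [h2, h3] at h1
      exact h1
    have hle : (⨆ ii : ℕ, edist (x (M + ii)) (f^[ii] (x M))) ≤ ENNReal.ofReal (δ' / 2) := by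
      refine iSup_le fun ii => ?_
      rw [edist_dist]
      exact ENNReal.ofReal_le_ofReal ((key2 ii).le.trans (min_le_left _ _))
    refine lt_of_le_of_lt hle ?_
    rw [ENNReal.ofReal_lt_ofReal_iff hδ']
    linarith
end

section
/- Every compact, totally disconnected metric space X is perturbable: for all ε > 0 there exists δ > 0 such that for every continuous function f : X → X, every finite subset F ⊆ X, and every function g₀ : F → X with d(g₀(x), f(x)) < δ for all x ∈ F, there exists a continuous function g : X → X with ρ(f,g) < ε and g(x) = g₀(x) for all x ∈ F. -/
open scoped ENNReal

theorem stmt7_aux {X : Type*} [MetricSpace X] [CompactSpace X] [TotallyDisconnectedSpace X]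
    {ε : ℝ} (hε : 0 < ε) (f : X → X) (hf : Continuous f) (F : Finset X) :
    ∀ g₀ : X → X, (∀ x ∈ F, dist (g₀ x) (f x) < ε / 2) →
      ∃ g : X → X, Continuous g ∧ (∀ y, dist (f y) (g y) ≤ 3 * ε / 4) ∧
        ∀ x ∈ F, g x = g₀ x := by
  classical
  induction F using Finset.induction_on with
  | empty =>
    intro g₀ _
    exact ⟨f, hf, fun y => by simp; positivity, fun x hx => by simp at hx⟩
  | @insert a F ha ih =>
    intro g₀ hg₀
    obtain ⟨g, hgc, hgb, hgv⟩ := ih g₀ (fun x hx => hg₀ x (Finset.mem_insert_of_mem hx))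
    -- open neighborhood of a avoiding F with f close to f a
    have hW : IsOpen (f ⁻¹' Metric.ball (f a) (ε / 4) ∩ (↑F : Set X)ᶜ) :=
      (Metric.isOpen_ball.preimage hf).inter (F.finite_toSet.isClosed.isOpen_compl)
    have haW : a ∈ f ⁻¹' Metric.ball (f a) (ε / 4) ∩ (↑F : Set X)ᶜ := by
      constructor
      · simp [Metric.mem_ball]; positivity
      · simpa using ha
    obtain ⟨U, hU, haU, hUW⟩ := compact_exists_isClopen_in_isOpen hW haW
    refine ⟨U.piecewise (fun _ => g₀ a) g, ?_, ?_, ?_⟩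
    · refine Continuous.piecewise ?_ continuous_const hgc
      intro y hy
      rw [hU.frontier_eq] at hy
      exact absurd hy (Set.notMem_empty y)
    · intro y
      by_cases hy : y ∈ U
      · rw [Set.piecewise_eq_of_mem _ _ _ hy]
        have h1 : dist (f y) (f a) < ε / 4 := (hUW hy).1
        have h2 : dist (g₀ a) (f a) < ε / 2 := hg₀ a (Finset.mem_insert_self a F)
        calc dist (f y) (g₀ a) ≤ dist (f y) (f a) + dist (f a) (g₀ a) := dist_triangle _ _ _
          _ = dist (f y) (f a) + dist (g₀ a) (f a) := by rw [dist_comm (f a)]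
          _ ≤ 3 * ε / 4 := by linarith
      · rw [Set.piecewise_eq_of_notMem _ _ _ hy]
        exact hgb y
    · intro x hx
      rcases Finset.mem_insert.mp hx with rfl | hx
      · exact Set.piecewise_eq_of_mem _ _ _ haU
      · have hxU : x ∉ U := fun h => (hUW h).2 (by simpa using hx)
        rw [Set.piecewise_eq_of_notMem _ _ _ hxU]
        exact hgv x hx

theorem stmt7 {X : Type*} [MetricSpace X] [CompactSpace X] [TotallyDisconnectedSpace X] :
    ∀ ε > (0 : ℝ), ∃ δ > (0 : ℝ), ∀ f : X → X, Continuous f →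
      ∀ F : Finset X, ∀ g₀ : X → X, (∀ x ∈ F, dist (g₀ x) (f x) < δ) →
        ∃ g : X → X, Continuous g ∧ rho f g < ENNReal.ofReal ε ∧ ∀ x ∈ F, g x = g₀ x := by
  intro ε hε
  refine ⟨ε / 2, by positivity, fun f hf F g₀ hg₀ => ?_⟩
  obtain ⟨g, hgc, hgb, hgv⟩ := stmt7_aux hε f hf F g₀ hg₀
  refine ⟨g, hgc, ?_, hgv⟩
  have hle : rho f g ≤ ENNReal.ofReal (3 * ε / 4) := by
    refine iSup_le fun x => ?_
    rw [edist_dist]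
    exact ENNReal.ofReal_le_ofReal (hgb x)
  refine lt_of_le_of_lt hle ?_
  rw [ENNReal.ofReal_lt_ofReal_iff hε]
  linarith
end

section
/- Let X be a weakly perturbable metric space, let (f_i)_{i∈ℕ} be a sequence of continuous functions from X to X, and let ε > 0. Then there exists δ > 0 such that for every δ-pseudo-orbit (x_i)_{i∈ℕ} for (f_i), there exists a sequence (g_i)_{i∈ℕ} of continuous functions from X to X with ρ((f_i),(g_i)) ≤ ε such that (x_i) is an orbit for (g_i), i.e. x_i = g_0^i(x_0) for all i ∈ ℕ. -/
open scoped ENNReal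

/-- A metric space is weakly perturbable. -/
def WeaklyPerturbable (X : Type*) [MetricSpace X] : Prop :=
  ∀ ε > (0 : ℝ), ∃ δ > (0 : ℝ), ∀ f : X → X, Continuous f →
    ∀ x y : X, dist y (f x) < δ →
      ∃ g : X → X, Continuous g ∧ rho f g < ENNReal.ofReal ε ∧ g x = y

theorem stmt8 {X : Type*} [MetricSpace X] (hX : WeaklyPerturbable X)
    (f : ℕ → X → X) (hf : ∀ i : ℕ, Continuous (f i)) (ε : ℝ) (hε : 0 < ε) :
    ∃ δ > (0 : ℝ), ∀ x : ℕ → X, (∀ i : ℕ, dist (f i (x i)) (x (i + 1)) < δ) →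
      ∃ g : ℕ → X → X, (∀ i : ℕ, Continuous (g i)) ∧ rhoSeq f g ≤ ENNReal.ofReal ε ∧
        ∀ i : ℕ, seqComp g i (x 0) = x i := by
  obtain ⟨δ, hδ, H⟩ := hX ε hε
  refine ⟨δ, hδ, fun x hx => ?_⟩
  have key : ∀ i, ∃ g : X → X, Continuous g ∧ rho (f i) g < ENNReal.ofReal ε ∧
      g (x i) = x (i + 1) := by
    intro i
    exact H (f i) (hf i) (x i) (x (i + 1)) (by rw [dist_comm]; exact hx i)
  choose g hgc hgρ hgx using key
  refine ⟨g, hgc, ?_, ?_⟩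
  · exact iSup_le fun i => (hgρ i).le
  · intro i
    induction i with
    | zero => rfl
    | succ n ih => simp [seqComp, ih, hgx n]
end

section
/- Let X be a weakly perturbable metric space and (f_i)_{i∈ℕ} a sequence of continuous functions from X to X. The nonautonomous dynamical system (X,(f_i)) has shadowing if and only if for all ε > 0 there exists δ > 0 such that for every sequence (g_i)_{i∈ℕ} of continuous functions from X to X with ρ((g_i),(f_i)) < δ, every (g_i)-orbit is ε-shadowed by an (f_i)-orbit. -/
open scoped ENNReal

theorem stmt9 {X : Type*} [MetricSpace X] (hX : WeaklyPerturbable X)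
    (f : ℕ → X → X) (hf : ∀ i : ℕ, Continuous (f i)) :
    ShadowingSeq f ↔
      ∀ ε > (0 : ℝ), ∃ δ > (0 : ℝ), ∀ g : ℕ → X → X, (∀ i : ℕ, Continuous (g i)) →
        rhoSeq g f < ENNReal.ofReal δ →
        ∀ x : X, ∃ z : X, ∀ i : ℕ, dist (seqComp g i x) (seqComp f i z) < ε := by
  constructor
  · intro hs ε hε
    obtain ⟨δ, hδ, H⟩ := hs ε hε
    refine ⟨δ, hδ, fun g hg hρ x => ?_⟩
    apply H
    intro i
    have h1 : edist (g i (seqComp g i x)) (f i (seqComp g i x)) < ENNReal.ofReal δ := by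
      refine lt_of_le_of_lt ?_ hρ
      calc edist (g i (seqComp g i x)) (f i (seqComp g i x))
          ≤ rho (g i) (f i) := le_iSup (fun y => edist (g i y) (f i y)) _
        _ ≤ rhoSeq g f := le_iSup (fun j => rho (g j) (f j)) i
    have h2 : dist (f i (seqComp g i x)) (g i (seqComp g i x)) < δ := by
      rw [dist_comm, ← edist_lt_ofReal]; exact h1
    exact h2
  · intro H ε hε
    obtain ⟨δ₁, hδ₁, H1⟩ := H ε hε
    obtain ⟨δ, hδ, Hp⟩ := hX (δ₁ / 2) (by positivity)
    refine ⟨δ, hδ, fun x hx => ?_⟩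
    choose g hgc hgρ hgx using fun i =>
      Hp (f i) (hf i) (x i) (x (i + 1)) (by rw [dist_comm]; exact hx i)
    have horb : ∀ i, seqComp g i (x 0) = x i := by
      intro i
      induction i with
      | zero => rfl
      | succ n ih => show g n (seqComp g n (x 0)) = _; rw [ih, hgx n]
    have hρ : rhoSeq g f < ENNReal.ofReal δ₁ := by
      have hle : rhoSeq g f ≤ ENNReal.ofReal (δ₁ / 2) := by
        apply iSup_le
        intro i
        have : rho (g i) (f i) = rho (f i) (g i) := by
          unfold rho; simp_rw [edist_comm]
        rw [this]
        exact (hgρ i).le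
      exact lt_of_le_of_lt hle ((ENNReal.ofReal_lt_ofReal_iff hδ₁).mpr (by linarith))
    obtain ⟨z, hz⟩ := H1 g hgc hρ (x 0)
    refine ⟨z, fun i => ?_⟩
    have := hz i
    rwa [horb i] at this
end

section
/- Let X be a weakly perturbable metric space and f : X → X continuous. The dynamical system (X,f) has shadowing if and only if for all ε > 0 there exists δ > 0 such that for every sequence (g_i)_{i∈ℕ} of continuous functions from X to X with sup_{i∈ℕ} sup_{x∈X} d(g_i(x), f(x)) < δ, every (g_i)-orbit is ε-shadowed by an f-orbit. -/
open scoped ENNReal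

/-- The autonomous system `(X, f)` has shadowing. -/
def Shadowing {X : Type*} [MetricSpace X] (f : X → X) : Prop :=
  ∀ ε > (0 : ℝ), ∃ δ > (0 : ℝ), ∀ x : ℕ → X,
    (∀ i : ℕ, dist (f (x i)) (x (i + 1)) < δ) →
    ∃ z : X, ∀ i : ℕ, dist (x i) (f^[i] z) < ε


lemma rho_dist_lt {X : Type*} [PseudoMetricSpace X] {f g : X → X} {c : ℝ}
    (h : rho f g < ENNReal.ofReal c) (x : X) : dist (f x) (g x) < c := by
  have : edist (f x) (g x) < ENNReal.ofReal c :=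
    lt_of_le_of_lt (le_iSup (fun x => edist (f x) (g x)) x) h
  rwa [edist_lt_ofReal] at this

lemma rho_symm {X : Type*} [PseudoMetricSpace X] (f g : X → X) : rho f g = rho g f := by
  simp [rho, edist_comm]

theorem stmt10 {X : Type*} [MetricSpace X] (hX : WeaklyPerturbable X)
    (f : X → X) (hf : Continuous f) :
    Shadowing f ↔
      ∀ ε > (0 : ℝ), ∃ δ > (0 : ℝ), ∀ g : ℕ → X → X, (∀ i : ℕ, Continuous (g i)) →
        rhoSeq g (fun _ => f) < ENNReal.ofReal δ →
        ∀ x : X, ∃ z : X, ∀ i : ℕ, dist (seqComp g i x) (f^[i] z) < ε := by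
  constructor
  · intro hsh ε hε
    obtain ⟨δ, hδ, hd⟩ := hsh ε hε
    refine ⟨δ, hδ, fun g hg hrho x => ?_⟩
    have hpo : ∀ i : ℕ, dist (f (seqComp g i x)) (seqComp g (i + 1) x) < δ := by
      intro i
      have h1 : rho (g i) f < ENNReal.ofReal δ :=
        lt_of_le_of_lt (le_iSup (fun i => rho (g i) ((fun _ => f) i)) i) hrho
      have h2 := rho_dist_lt (rho_symm (g i) f ▸ h1) (seqComp g i x)
      simpa [seqComp, dist_comm] using h2
    exact hd (fun i => seqComp g i x) hpo
  · intro h ε hε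
    obtain ⟨δ, hδ, hd⟩ := h ε hε
    obtain ⟨δ', hδ', hp⟩ := hX (δ / 2) (by linarith)
    refine ⟨δ', hδ', fun x hx => ?_⟩
    have key : ∀ i : ℕ, ∃ g : X → X, Continuous g ∧ rho f g < ENNReal.ofReal (δ / 2) ∧
        g (x i) = x (i + 1) := fun i =>
      hp f hf (x i) (x (i + 1)) (by rw [dist_comm]; exact hx i)
    choose g hgc hgr hgx using key
    have hrho : rhoSeq g (fun _ => f) < ENNReal.ofReal δ := by
      have h1 : rhoSeq g (fun _ => f) ≤ ENNReal.ofReal (δ / 2) :=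
        iSup_le fun i => le_of_lt (rho_symm (g i) f ▸ hgr i)
      exact lt_of_le_of_lt h1 (ENNReal.ofReal_lt_ofReal_iff hδ |>.mpr (by linarith))
    obtain ⟨z, hz⟩ := hd g hgc hrho (x 0)
    have horb : ∀ i, seqComp g i (x 0) = x i := by
      intro i
      induction i with
      | zero => rfl
      | succ n ih => simp [seqComp, ih, hgx n]
    exact ⟨z, fun i => horb i ▸ hz i⟩
end
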